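/- For a ∈ [0,∞), the Markov selection (P_x^a) of the Peano example has δ_1 as its unique invariant measure, while for a = ∞ (the absorbing selection) every convex combination of δ_0 and δ_1 is invariant. -/

import Mathlib

open MeasureTheory

/-- The flow of `Ẋ = -X + √X`: `X_x(t) = (1 + (√x - 1) e^{-t/2})²` (for `x ∈ (0,1]` this is
the unique solution; `X_0 = X⋆` is the strictly positive solution starting at `0`). -/
noncomputable def peanoFlow (x t : ℝ) : ℝ :=
  (1 + (Real.sqrt x - 1) * Real.exp (-t / 2)) ^ 2

/-- Transition operator of the Markov selection with an exponential waiting time of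
parameter `a ∈ [0,∞)` at `0` (mean waiting time `a`; `a = 0` is immediate departure):
away from `0` the dynamics is the deterministic flow. -/
noncomputable def peanoTrans (a t : ℝ) (f : ℝ → ℝ) (x : ℝ) : ℝ :=
  if x = 0 then
    (if a = 0 then f (peanoFlow 0 t)
      else ∫ s in Set.Ioi (0:ℝ),
        a⁻¹ * Real.exp (-s / a) * f (peanoFlow 0 (max (t - s) 0)))
  else f (peanoFlow x t)

/-- Transition operator of the absorbing selection (`a = ∞`): the solution stays at `0`
forever. -/
noncomputable def peanoTransInf (t : ℝ) (f : ℝ → ℝ) (x : ℝ) : ℝ :=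
  if x = 0 then f 0 else f (peanoFlow x t)

/-!
Every trajectory, including the one leaving `0` after an exponential waiting time, converges
to the fixed point `1`. By dominated convergence `P_t f → f 1` pointwise and boundedly, so
integrating against an invariant `μ` gives `∫ f dμ = f 1` for every bounded continuous `f`,
i.e. `μ = δ₁`. For the absorbing selection both `0` and `1` are fixed, so `P_t f = f` on
`{0, 1}`, which carries every combination of `δ₀` and `δ₁`.
-/

open Filter Topology Set
open scoped BoundedContinuousFunction ENNReal

lemma peanoFlow_one (t : ℝ) : peanoFlow 1 t = 1 := by simp [peanoFlow]

lemma continuous_peanoFlow : Continuous (fun p : ℝ × ℝ => peanoFlow p.1 p.2) := by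
  unfold peanoFlow; fun_prop

lemma tendsto_peanoFlow_atTop (x : ℝ) : Tendsto (peanoFlow x) atTop (𝓝 1) := by
  have hexp : Tendsto (fun t : ℝ => Real.exp (-t / 2)) atTop (𝓝 0) :=
    Real.tendsto_exp_atBot.comp (tendsto_neg_atTop_atBot.atBot_div_const two_pos)
  unfold peanoFlow
  simpa using ((hexp.const_mul (Real.sqrt x - 1)).const_add 1).pow 2

lemma integrableOn_exp_density {a : ℝ} (ha : 0 < a) :
    IntegrableOn (fun s => a⁻¹ * Real.exp (-s / a)) (Ioi 0) := by
  have h : ∀ s : ℝ, -s / a = -a⁻¹ * s := fun s => by field_simp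
  simp_rw [h]
  exact (exp_neg_integrableOn_Ioi 0 (inv_pos.2 ha)).const_mul _

lemma setIntegral_exp_density {a : ℝ} (ha : 0 < a) :
    ∫ s in Ioi 0, a⁻¹ * Real.exp (-s / a) = 1 := by
  have h : ∀ s : ℝ, -s / a = -(a⁻¹ * s) := fun s => by field_simp
  simp_rw [h, integral_const_mul]
  rw [integral_comp_mul_left_Ioi (fun u => Real.exp (-u)) 0 (inv_pos.2 ha)]
  simp [integral_exp_Iic_zero, ha.ne']

lemma norm_setIntegral_exp_density_mul_le {a C : ℝ} (ha : 0 < a) {g : ℝ → ℝ}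
    (hg : ∀ s, ‖g s‖ ≤ C) : ‖∫ s in Ioi 0, a⁻¹ * Real.exp (-s / a) * g s‖ ≤ C := by
  have hw : ∀ s : ℝ, 0 ≤ a⁻¹ * Real.exp (-s / a) := fun s => by positivity
  calc ‖∫ s in Ioi 0, a⁻¹ * Real.exp (-s / a) * g s‖
      ≤ ∫ s in Ioi 0, a⁻¹ * Real.exp (-s / a) * C := by
        refine norm_integral_le_of_norm_le ((integrableOn_exp_density ha).mul_const C) ?_
        filter_upwards with s
        rw [norm_mul, Real.norm_of_nonneg (hw s)]
        exact mul_le_mul_of_nonneg_left (hg s) (hw s)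
    _ = C := by rw [integral_mul_const, setIntegral_exp_density ha, one_mul]

lemma tendsto_setIntegral_exp_density_mul {ι : Type*} {l : Filter ι} [l.IsCountablyGenerated]
    {a C y : ℝ} (ha : 0 < a) {g : ι → ℝ → ℝ}
    (hmeas : ∀ i, AEStronglyMeasurable (g i) (volume.restrict (Ioi 0)))
    (hbound : ∀ i s, ‖g i s‖ ≤ C) (hlim : ∀ s, Tendsto (fun i => g i s) l (𝓝 y)) :
    Tendsto (fun i => ∫ s in Ioi 0, a⁻¹ * Real.exp (-s / a) * g i s) l (𝓝 y) := by
  have hw : ∀ s : ℝ, 0 ≤ a⁻¹ * Real.exp (-s / a) := fun s => by positivity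
  have hdens : Continuous fun s : ℝ => a⁻¹ * Real.exp (-s / a) := by fun_prop
  have key := tendsto_integral_filter_of_dominated_convergence
    (μ := volume.restrict (Ioi 0)) (fun s => a⁻¹ * Real.exp (-s / a) * C)
    (Eventually.of_forall fun i => hdens.aestronglyMeasurable.mul (hmeas i))
    (Eventually.of_forall fun i => Eventually.of_forall fun s => by
      rw [Pi.mul_apply, norm_mul, Real.norm_of_nonneg (hw s)]
      exact mul_le_mul_of_nonneg_left (hbound i s) (hw s))
    ((integrableOn_exp_density ha).mul_const C)
    (Eventually.of_forall fun s => (hlim s).const_mul _)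
  rwa [integral_mul_const, setIntegral_exp_density ha, one_mul] at key

lemma peanoTrans_one (a t : ℝ) (f : ℝ → ℝ) : peanoTrans a t f 1 = f 1 := by
  simp [peanoTrans, peanoFlow_one]

lemma measurable_peanoTrans (a t : ℝ) {f : ℝ → ℝ} (hf : Measurable f) :
    Measurable (peanoTrans a t f) :=
  Measurable.ite (measurableSet_singleton 0) measurable_const
    (hf.comp (continuous_peanoFlow.comp (Continuous.prodMk_left t)).measurable)

lemma norm_peanoTrans_le {a : ℝ} (ha : 0 ≤ a) (t : ℝ) {f : ℝ → ℝ} {C : ℝ} (hf : ∀ y, ‖f y‖ ≤ C)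
    (x : ℝ) : ‖peanoTrans a t f x‖ ≤ C := by
  unfold peanoTrans
  split_ifs with _ ha0
  · exact hf _
  · exact norm_setIntegral_exp_density_mul_le (lt_of_le_of_ne ha (Ne.symm ha0)) fun _ => hf _
  · exact hf _

lemma tendsto_peanoTrans_atTop {a : ℝ} (ha : 0 ≤ a) (f : ℝ →ᵇ ℝ) (x : ℝ) :
    Tendsto (fun t => peanoTrans a t f x) atTop (𝓝 (f 1)) := by
  have hf1 : ∀ {u : ℝ → ℝ}, Tendsto u atTop atTop →
      Tendsto (fun t => f (peanoFlow x (u t))) atTop (𝓝 (f 1)) := fun hu =>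
    (f.continuous.tendsto 1).comp ((tendsto_peanoFlow_atTop x).comp hu)
  unfold peanoTrans
  split_ifs with hx ha0
  · subst hx; exact hf1 tendsto_id
  · subst hx
    refine tendsto_setIntegral_exp_density_mul (lt_of_le_of_ne ha (Ne.symm ha0))
      (fun t => ?_) (fun _ _ => f.norm_coe_le_norm _) (fun s => hf1 ?_)
    · have : Continuous fun s => f (peanoFlow 0 (max (t - s) 0)) := by
        unfold peanoFlow; fun_prop
      exact this.aestronglyMeasurable
    · exact tendsto_atTop_mono (fun t => le_max_left (t - s) 0)
        (tendsto_atTop_add_const_right _ (-s) tendsto_id)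
  · exact hf1 tendsto_id

lemma tendsto_integral_peanoTrans_atTop {a : ℝ} (ha : 0 ≤ a) (μ : Measure ℝ)
    [IsProbabilityMeasure μ] (f : ℝ →ᵇ ℝ) :
    Tendsto (fun t => ∫ x, peanoTrans a t f x ∂μ) atTop (𝓝 (f 1)) := by
  have key := tendsto_integral_filter_of_dominated_convergence (μ := μ) (fun _ => ‖f‖)
    (Eventually.of_forall fun t =>
      (measurable_peanoTrans a t f.continuous.measurable).aestronglyMeasurable)
    (Eventually.of_forall fun t =>
      Eventually.of_forall (norm_peanoTrans_le ha t f.norm_coe_le_norm))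
    (integrable_const _) (Eventually.of_forall (tendsto_peanoTrans_atTop ha f))
  simpa using key

lemma eq_dirac_one_of_invariant {a : ℝ} (ha : 0 ≤ a) (μ : Measure ℝ) [IsProbabilityMeasure μ]
    (hinv : ∀ t, 0 ≤ t → ∀ f : ℝ →ᵇ ℝ, ∫ x, peanoTrans a t f x ∂μ = ∫ x, f x ∂μ) :
    μ = Measure.dirac 1 := by
  refine ext_of_forall_integral_eq_of_IsFiniteMeasure fun f => ?_
  rw [integral_dirac]
  refine tendsto_nhds_unique ?_ (tendsto_integral_peanoTrans_atTop ha μ f)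
  refine tendsto_const_nhds.congr' ?_
  filter_upwards [eventually_ge_atTop 0] with t ht using (hinv t ht f).symm

lemma peanoTransInf_zero (t : ℝ) (f : ℝ → ℝ) : peanoTransInf t f 0 = f 0 := by
  simp [peanoTransInf]

lemma peanoTransInf_one (t : ℝ) (f : ℝ → ℝ) : peanoTransInf t f 1 = f 1 := by
  simp [peanoTransInf, peanoFlow_one]

lemma ae_eq_or_eq_smul_dirac_add_smul_dirac {α R : Type*} [MeasurableSpace α]
    [MeasurableSingletonClass α] [SMul R ℝ≥0∞] [IsScalarTower R ℝ≥0∞ ℝ≥0∞] (c d : R) (y z : α) :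
    ∀ᵐ x ∂(c • Measure.dirac y + d • Measure.dirac z), x = y ∨ x = z := by
  have hy : ∀ᵐ x ∂Measure.dirac y, x = y ∨ x = z := by simp [ae_dirac_eq]
  have hz : ∀ᵐ x ∂Measure.dirac z, x = y ∨ x = z := by simp [ae_dirac_eq]
  exact ae_add_measure_iff.2 ⟨Measure.ae_smul_measure hy c, Measure.ae_smul_measure hz d⟩

/-- For `a ∈ [0,∞)` the Markov selection of the Peano example has `δ₁` as its unique
invariant measure, while for `a = ∞` (the absorbing selection) every convex combination of
`δ₀` and `δ₁` is invariant. -/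
theorem stmt_13 :
    (∀ a : ℝ, 0 ≤ a → ∀ μ : Measure ℝ, IsProbabilityMeasure μ →
      μ (Set.Icc 0 1) = 1 →
      ((∀ t : ℝ, 0 ≤ t → ∀ f : BoundedContinuousFunction ℝ ℝ,
          ∫ x, peanoTrans a t f x ∂μ = ∫ x, f x ∂μ) ↔ μ = Measure.dirac 1)) ∧
    (∀ c ∈ Set.Icc (0:ℝ) 1, ∀ t : ℝ, 0 ≤ t → ∀ f : BoundedContinuousFunction ℝ ℝ,
      ∫ x, peanoTransInf t f x
          ∂(ENNReal.ofReal c • Measure.dirac (0:ℝ) +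
            ENNReal.ofReal (1 - c) • Measure.dirac (1:ℝ)) =
        ∫ x, f x
          ∂(ENNReal.ofReal c • Measure.dirac (0:ℝ) +
            ENNReal.ofReal (1 - c) • Measure.dirac (1:ℝ))) := by
  refine ⟨fun a ha μ _ _ => ⟨eq_dirac_one_of_invariant ha μ, ?_⟩, ?_⟩
  · rintro rfl t _ f
    simp only [integral_dirac, peanoTrans_one]
  · intro c _ t _ f
    refine integral_congr_ae ((ae_eq_or_eq_smul_dirac_add_smul_dirac _ _ 0 1).mono ?_)
    rintro x (rfl | rfl)
    exacts [peanoTransInf_zero t f, peanoTransInf_one t f]
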